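/- Let p be a prime and let the weights be n_i = p^{e_i} for i = 1,…,s, where e_1 ≤ e_2 ≤ ⋯ ≤ e_s ∈ ℕ. Then the multiplicity m_1 of 1 as a root of χ_{[n_1,…,n_s]} in ℂ is m_1 = ∑_{j=2}^{s} (−1)^{s−j} · ∏_{i=1}^{j−1} (p^{e_i} − 1). In particular m_1 = 0 when s = 1, and for s ≥ 2 one has m_1 > 0 except when p = 2 and e_1 = ⋯ = e_{s−1} = 1 with s odd. -/

import Mathlib

open Matrix Polynomial

/-- The Coxeter matrix `Φ_[n]` of the linearly oriented quiver of type `A_{n-1}`: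
the `(n-1) × (n-1)` integer matrix whose `(i,j)`-entry is `1` if `j = i + 1`
(for rows other than the last), whose last row has all entries `-1`, and whose
other entries are `0`. -/
def PhiA (n : ℕ) : Matrix (Fin (n - 1)) (Fin (n - 1)) ℤ :=
  fun i j =>
    if (i : ℕ) = n - 2 then -1
    else if (j : ℕ) = (i : ℕ) + 1 then 1 else 0

/-- The Kronecker (tensor) product `Φ_{[n_1,…,n_s]} = Φ_{[n_1]} ⊗ ⋯ ⊗ Φ_{[n_s]}`,
realized on the index type `Π i, Fin (n i - 1)`. -/
def PhiProd {s : ℕ} (n : Fin s → ℕ) :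
    Matrix ((i : Fin s) → Fin (n i - 1)) ((i : Fin s) → Fin (n i - 1)) ℤ :=
  fun x y => ∏ i, PhiA (n i) (x i) (y i)

/-- The characteristic polynomial `χ_{[n_1,…,n_s]} ∈ ℤ[X]` of `Φ_{[n_1,…,n_s]}`. -/
noncomputable def Chi {s : ℕ} (n : Fin s → ℕ) : Polynomial ℤ :=
  (PhiProd n).charpoly

/-- The standard primitive complex `m`-th root of unity `exp(2π√-1/m)`. -/
noncomputable def zeta (m : ℕ) : ℂ := Complex.exp (2 * Real.pi * Complex.I / m)

/-!
`Φ_[n]` is the companion matrix of `1 + X + ⋯ + X^(n-1)`, diagonalised by a Vandermonde matrix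
with eigenvalues `ζ_n^k`, `0 < k < n`. Hence `Φ_{[n_1,…,n_s]}` is similar to the diagonal matrix
of the products `∏ ζ_{n_i}^{k_i}`, and `m_1` counts the tuples `k` with `∏ ζ_{n_i}^{k_i} = 1`.

When `n_1 ∣ ⋯ ∣ n_s`, as for prime powers with increasing exponents, `w = ∏_{i<s} ζ_{n_i}^{k_i}` is
an `n_s`-th root of unity, and `w ζ_{n_s}^{k_s} = 1` has exactly one solution `0 < k_s < n_s`
if `w ≠ 1` and none if `w = 1`. So `m_1(n_1,…,n_s) + m_1(n_1,…,n_{s-1}) = ∏_{i<s} (n_i - 1)`,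
which unrolls to the alternating sum; and `m_1 = 0` exactly when every such `w` is `1`, i.e. when
`n_1 = ⋯ = n_{s-1} = 2` and `s - 1` is even.
-/

open Finset

namespace Matrix

variable {ι R : Type*} [Fintype ι] [CommSemiring R] {l m o : ι → Type*}

def piKronecker (A : ∀ i, Matrix (l i) (m i) R) : Matrix (∀ i, l i) (∀ i, m i) R :=
  fun x y => ∏ i, A i (x i) (y i)

theorem piKronecker_mul [DecidableEq ι] [∀ i, Fintype (m i)] (A : ∀ i, Matrix (l i) (m i) R)
    (B : ∀ i, Matrix (m i) (o i) R) :
    piKronecker A * piKronecker B = piKronecker fun i => A i * B i := by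
  ext x z
  simp only [piKronecker, mul_apply, prod_univ_sum, Fintype.piFinset_univ,
    prod_mul_distrib]

theorem piKronecker_diagonal [∀ i, DecidableEq (l i)] (d : ∀ i, l i → R) :
    piKronecker (fun i => diagonal (d i)) = diagonal fun x => ∏ i, d i (x i) := by
  ext x y
  by_cases hxy : x = y
  · subst hxy
    simp [piKronecker]
  · obtain ⟨i, hi⟩ := Function.ne_iff.mp hxy
    rw [diagonal_apply_ne _ hxy]
    exact prod_eq_zero (mem_univ i) (diagonal_apply_ne _ hi)

theorem piKronecker_one [∀ i, DecidableEq (l i)] :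
    piKronecker (fun i => (1 : Matrix (l i) (l i) R)) = 1 := by
  simpa using piKronecker_diagonal fun i (_ : l i) => (1 : R)

theorem isUnit_piKronecker [DecidableEq ι] [∀ i, Fintype (l i)] [∀ i, DecidableEq (l i)]
    {A : ∀ i, Matrix (l i) (l i) R} (hA : ∀ i, IsUnit (A i)) : IsUnit (piKronecker A) :=
  ⟨⟨piKronecker A, piKronecker fun i => ↑(hA i).unit⁻¹,
    by simp [piKronecker_mul, piKronecker_one], by simp [piKronecker_mul, piKronecker_one]⟩, rfl⟩

theorem charpoly_eq_of_semiconjBy {n R : Type*} [Fintype n] [DecidableEq n] [CommRing R]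
    {A P D : Matrix n n R} (hP : IsUnit P) (h : SemiconjBy P D A) :
    A.charpoly = D.charpoly := by
  obtain ⟨U, rfl⟩ := hP
  rw [← charpoly_units_conj U D, h.eq]
  simp

end Matrix

theorem Polynomial.rootMultiplicity_prod_X_sub_C {ι R : Type*} [CommRing R] [IsDomain R]
    [DecidableEq R] (s : Finset ι) (d : ι → R) (a : R) :
    rootMultiplicity a (∏ x ∈ s, (X - C (d x))) = #{x ∈ s | d x = a} := by
  rw [← count_roots, roots_prod _ _ (prod_ne_zero_iff.mpr fun x _ => X_sub_C_ne_zero (d x))]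
  simp only [roots_X_sub_C, Multiset.bind_singleton, Multiset.count_map, eq_comm]
  rfl

theorem IsPrimitiveRoot.card_filter_mul_pow_succ_eq_one {R : Type*} [CommRing R] [IsDomain R]
    [DecidableEq R] {ω w : R} {N : ℕ} (hω : IsPrimitiveRoot ω N) (hN : 0 < N) (hw : w ^ N = 1) :
    #{k : Fin (N - 1) | w * ω ^ ((k : ℕ) + 1) = 1} = if w = 1 then 0 else 1 := by
  have : NeZero N := ⟨hN.ne'⟩
  obtain ⟨a, ha, rfl⟩ := hω.eq_pow_of_pow_eq_one hw
  have hdvd (k : Fin (N - 1)) : ω ^ a * ω ^ ((k : ℕ) + 1) = 1 ↔ N ∣ a + (k + 1) := by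
    rw [← pow_add, hω.pow_eq_one_iff_dvd]
  rcases Nat.eq_zero_or_pos a with rfl | ha0
  · rw [if_pos (pow_zero ω), card_eq_zero, filter_eq_empty_iff]
    intro k _ hk
    have := Nat.le_of_dvd (by omega) ((hdvd k).mp hk)
    omega
  · rw [if_neg (hω.pow_ne_one_of_pos_of_lt ha0.ne' ha), card_eq_one]
    refine ⟨⟨N - 1 - a, by omega⟩, eq_singleton_iff_unique_mem.mpr ⟨?_, fun k hk => ?_⟩⟩
    · simp only [mem_filter, mem_univ, true_and, hdvd]
      exact ⟨1, by omega⟩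
    · have := Nat.eq_of_dvd_of_lt_two_mul (by omega) ((hdvd k).mp (mem_filter.mp hk).2) (by omega)
      ext
      simp only
      omega

theorem PhiA_map_mulVec_geom {R : Type*} [CommRing R] (n : ℕ) {w : R}
    (hw : ∑ j ∈ range n, w ^ j = 0) :
    (PhiA n).map (Int.castRingHom R) *ᵥ (fun j : Fin (n - 1) => w ^ (j : ℕ)) =
      w • fun j : Fin (n - 1) => w ^ (j : ℕ) := by
  ext i
  simp only [mulVec, dotProduct, map_apply, PhiA, Pi.smul_apply, smul_eq_mul]
  split_ifs with hlast
  · have hsplit := sum_range_succ (fun j => w ^ j) (n - 1)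
    rw [Nat.sub_add_cancel (by omega), hw, ← Fin.sum_univ_eq_sum_range] at hsplit
    simp only [map_neg, map_one, neg_one_mul, sum_neg_distrib, hlast, ← pow_succ']
    rw [show n - 2 + 1 = n - 1 by omega]
    linear_combination hsplit
  · rw [sum_eq_single ⟨i + 1, by omega⟩]
    · simp [pow_succ']
    · intro j _ hj
      simp only [ne_eq, Fin.ext_iff] at hj
      simp [hj]
    · simp

theorem zeta_isPrimitiveRoot {m : ℕ} (hm : m ≠ 0) : IsPrimitiveRoot (zeta m) m :=
  Complex.isPrimitiveRoot_exp m hm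

noncomputable def phiEigenbasis (n : ℕ) : Matrix (Fin (n - 1)) (Fin (n - 1)) ℂ :=
  (vandermonde fun k : Fin (n - 1) => zeta n ^ ((k : ℕ) + 1))ᵀ

theorem isUnit_phiEigenbasis (n : ℕ) : IsUnit (phiEigenbasis n) := by
  rw [isUnit_iff_isUnit_det, phiEigenbasis, det_transpose, isUnit_iff_ne_zero,
    det_vandermonde_ne_zero_iff]
  intro k l hkl
  have hζ := zeta_isPrimitiveRoot (m := n) (by have := k.isLt; omega)
  exact Fin.ext (by simpa using hζ.pow_inj (by omega) (by omega) hkl)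

theorem semiconjBy_phiEigenbasis (n : ℕ) :
    SemiconjBy (phiEigenbasis n) (diagonal fun k : Fin (n - 1) => zeta n ^ ((k : ℕ) + 1))
      ((PhiA n).map (Int.castRingHom ℂ)) := by
  rw [SemiconjBy]
  ext j k
  have hζ := zeta_isPrimitiveRoot (m := n) (by have := k.isLt; omega)
  set w := zeta n ^ ((k : ℕ) + 1)
  have hw : ∑ i ∈ range n, w ^ i = 0 := by
    rw [geom_sum_eq (hζ.pow_ne_one_of_pos_of_lt (by omega) (by omega)), ← pow_mul, mul_comm,
      pow_mul, hζ.pow_eq_one, one_pow, sub_self, zero_div]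
  have := congrFun (PhiA_map_mulVec_geom n hw) j
  simp only [mulVec, dotProduct, Pi.smul_apply, smul_eq_mul] at this
  rw [mul_diagonal, mul_apply]
  simpa [phiEigenbasis, mul_comm] using this.symm

/-- The eigenvalue `∏ ζ_{n_i}^{k_i}` of `Φ_{[n_1,…,n_s]}`, indexed by `x_i = k_i - 1`. -/
noncomputable def phiEigenvalue {s : ℕ} (n : Fin s → ℕ) (x : ∀ i, Fin (n i - 1)) : ℂ :=
  ∏ i, zeta (n i) ^ ((x i : ℕ) + 1)

theorem rootMultiplicity_Chi_map {s : ℕ} (n : Fin s → ℕ) (a : ℂ) :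
    rootMultiplicity a ((Chi n).map (Int.castRingHom ℂ)) = #{x | phiEigenvalue n x = a} := by
  have hPhi : (PhiProd n).map (Int.castRingHom ℂ) =
      piKronecker fun i => (PhiA (n i)).map (Int.castRingHom ℂ) := by
    ext x y
    simp [PhiProd, piKronecker]
  have hdiag : (piKronecker fun i => diagonal fun k : Fin (n i - 1) => zeta (n i) ^ ((k : ℕ) + 1))
      = diagonal (phiEigenvalue n) :=
    piKronecker_diagonal _
  have hconj : SemiconjBy (piKronecker fun i => phiEigenbasis (n i))
      (diagonal (phiEigenvalue n)) ((PhiProd n).map (Int.castRingHom ℂ)) := by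
    rw [hPhi, ← hdiag, SemiconjBy, piKronecker_mul, piKronecker_mul]
    exact congrArg piKronecker (funext fun i => semiconjBy_phiEigenbasis (n i))
  rw [Chi, ← charpoly_map, charpoly_eq_of_semiconjBy (isUnit_piKronecker fun i =>
    isUnit_phiEigenbasis (n i)) hconj, charpoly_diagonal, rootMultiplicity_prod_X_sub_C]

theorem card_phiEigenvalue_eq_one_eq_card_init_ne_one {s : ℕ} (n : Fin (s + 1) → ℕ)
    (hN : 0 < n (Fin.last s)) (hdvd : ∀ i : Fin s, n i.castSucc ∣ n (Fin.last s)) :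
    #{x | phiEigenvalue n x = 1} = #{y | phiEigenvalue (Fin.init n) y ≠ 1} := by
  set N := n (Fin.last s)
  set init : (∀ i : Fin s, Fin (n i.castSucc - 1)) → ℂ := phiEigenvalue fun i => n i.castSucc
  have hζ := zeta_isPrimitiveRoot hN.ne'
  have hpow (y) : init y ^ N = 1 := by
    simp only [init, phiEigenvalue, ← prod_pow]
    refine prod_eq_one fun i _ => ?_
    have hi := zeta_isPrimitiveRoot (Nat.pos_of_dvd_of_pos (hdvd i) hN).ne'
    rw [← pow_mul, mul_comm, pow_mul, hi.pow_eq_one_iff_dvd N |>.mpr (hdvd i), one_pow]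
  have hsnoc (y) (k : Fin (N - 1)) :
      phiEigenvalue n (Fin.snoc y k) = init y * zeta N ^ ((k : ℕ) + 1) := by
    simp only [init, phiEigenvalue, Fin.prod_univ_castSucc, Fin.snoc_castSucc, Fin.snoc_last]
    rfl
  calc #{x | phiEigenvalue n x = 1}
      = ∑ y, #{k : Fin (N - 1) | init y * zeta N ^ ((k : ℕ) + 1) = 1} := by
        rw [card_filter, ← (Fin.snocEquiv fun i => Fin (n i - 1)).sum_comp,
          Fintype.sum_prod_type, sum_comm]
        refine sum_congr rfl fun y _ => ?_
        simp only [card_filter, Fin.snocEquiv, Equiv.coe_fn_mk, hsnoc]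
        rfl
    _ = ∑ y, if init y = 1 then 0 else 1 :=
        sum_congr rfl fun y _ => hζ.card_filter_mul_pow_succ_eq_one hN (hpow y)
    _ = #{y | init y ≠ 1} := by
        simp only [card_filter, ite_not]

theorem card_phiEigenvalue_eq_one_add_card_init {s : ℕ} (n : Fin (s + 1) → ℕ)
    (hN : 0 < n (Fin.last s)) (hdvd : ∀ i : Fin s, n i.castSucc ∣ n (Fin.last s)) :
    #{x | phiEigenvalue n x = 1} + #{y | phiEigenvalue (Fin.init n) y = 1} =
      ∏ i : Fin s, (n i.castSucc - 1) := by
  rw [card_phiEigenvalue_eq_one_eq_card_init_ne_one n hN hdvd, add_comm,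
    card_filter_add_card_filter_not, card_univ, Fintype.card_pi]
  exact prod_congr rfl fun i _ => Fintype.card_fin _

def altPrefixSum {R : Type*} [CommRing R] {s : ℕ} (a : Fin s → R) : R :=
  ∑ j ∈ Icc 2 s, (-1) ^ (s - j) * ∏ i ∈ univ.filter (fun i : Fin s => (i : ℕ) < j - 1), a i

theorem prod_filter_val_lt_castSucc {M : Type*} [CommMonoid M] {m j : ℕ} (f : Fin (m + 1) → M)
    (hj : j ≤ m) :
    ∏ i ∈ univ.filter (fun i : Fin (m + 1) => (i : ℕ) < j), f i =
      ∏ i ∈ univ.filter (fun i : Fin m => (i : ℕ) < j), f i.castSucc := by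
  rw [prod_filter, prod_filter, Fin.prod_univ_castSucc, Fin.val_last, if_neg (by omega), mul_one]
  rfl

theorem altPrefixSum_succ {R : Type*} [CommRing R] {m : ℕ} (a : Fin (m + 2) → R) :
    altPrefixSum a = ∏ i, Fin.init a i - altPrefixSum (Fin.init a) := by
  rw [altPrefixSum, sum_Icc_succ_top (by omega), Nat.sub_self, pow_zero, one_mul,
    Nat.add_sub_cancel, prod_filter_val_lt_castSucc a le_rfl,
    filter_true_of_mem fun i _ => i.isLt, altPrefixSum, sub_eq_neg_add, ← sum_neg_distrib]
  congr 1
  refine sum_congr rfl fun j hj => ?_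
  rw [mem_Icc] at hj
  rw [prod_filter_val_lt_castSucc a (by omega), show m + 2 - j = m + 1 - j + 1 by omega, pow_succ]
  simp [Fin.init]

theorem card_phiEigenvalue_eq_one_eq_altPrefixSum {s : ℕ} (n : Fin (s + 1) → ℕ)
    (hpos : ∀ i, 0 < n i) (hdvd : ∀ ⦃i j⦄, i ≤ j → n i ∣ n j) :
    (#{x | phiEigenvalue n x = 1} : ℤ) = altPrefixSum fun i => (n i : ℤ) - 1 := by
  induction s with
  | zero =>
    rw [card_phiEigenvalue_eq_one_eq_card_init_ne_one n (hpos _) fun i => i.elim0]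
    simp [phiEigenvalue, altPrefixSum]
  | succ s ih =>
    have hrec := card_phiEigenvalue_eq_one_add_card_init n (hpos _)
      fun i => hdvd (Fin.le_last _)
    have hinit : (#{y | phiEigenvalue (Fin.init n) y = 1} : ℤ) =
        altPrefixSum (Fin.init fun i => (n i : ℤ) - 1) := ih (Fin.init n) (fun i => hpos _)
      fun i j hij => hdvd (Fin.castSucc_le_castSucc_iff.mpr hij)
    rw [altPrefixSum_succ, ← hinit, eq_sub_iff_add_eq, ← Nat.cast_add, hrec, Nat.cast_prod]
    refine prod_congr rfl fun i _ => ?_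
    rw [Nat.cast_sub (hpos _)]
    rfl

theorem zeta_two : zeta 2 = -1 :=
  (zeta_isPrimitiveRoot two_ne_zero).eq_neg_one_of_two_right

theorem forall_phiEigenvalue_eq_one_iff {s : ℕ} (n : Fin s → ℕ) (hn : ∀ i, 2 ≤ n i) :
    (∀ x, phiEigenvalue n x = 1) ↔ (∀ i, n i = 2) ∧ Even s := by
  have hsign (hn2 : ∀ i, n i = 2) (x : ∀ i, Fin (n i - 1)) : phiEigenvalue n x = (-1) ^ s := by
    have hx (i) : (x i : ℕ) = 0 := by have := (x i).isLt; have := hn2 i; omega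
    simp only [phiEigenvalue, hx, hn2, zeta_two, zero_add, pow_one, prod_const, card_univ,
      Fintype.card_fin]
  let x₀ : ∀ i, Fin (n i - 1) := fun i => ⟨0, by have := hn i; omega⟩
  constructor
  · intro h
    -- Otherwise raising `x₀ i` from `0` to `1` multiplies the eigenvalue by `ζ_{n_i} ≠ 1`.
    have hn2 (i : Fin s) : n i = 2 := by
      by_contra hi
      have hζ := zeta_isPrimitiveRoot (m := n i) (by have := hn i; omega)
      let x₁ := Function.update x₀ i ⟨1, by have := hn i; omega⟩
      have hfactor (x : ∀ i, Fin (n i - 1)) : phiEigenvalue n x =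
          zeta (n i) ^ ((x i : ℕ) + 1) * ∏ j ∈ {i}ᶜ, zeta (n j) ^ ((x j : ℕ) + 1) :=
        Fintype.prod_eq_mul_prod_compl i _
      have hrest : ∏ j ∈ {i}ᶜ, zeta (n j) ^ ((x₁ j : ℕ) + 1) =
          ∏ j ∈ {i}ᶜ, zeta (n j) ^ ((x₀ j : ℕ) + 1) :=
        prod_congr rfl fun j hj => by
          rw [show x₁ j = x₀ j from Function.update_of_ne (by simpa using hj) _ _]
      have h₀ := (hfactor x₀).symm.trans (h x₀)
      have h₁ := (hfactor x₁).symm.trans (h x₁)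
      rw [hrest] at h₁
      have := hζ.pow_inj (by omega) (by omega) (mul_right_cancel₀ (right_ne_zero_of_mul_eq_one h₀)
        (h₁.trans h₀.symm))
      simp [x₀, x₁] at this
    exact ⟨hn2, (neg_one_pow_eq_one_iff_even (by norm_num)).mp ((hsign hn2 x₀).symm.trans (h x₀))⟩
  · rintro ⟨hn2, heven⟩ x
    rw [hsign hn2, heven.neg_one_pow]

theorem card_phiEigenvalue_eq_one_pos_iff {s : ℕ} (n : Fin (s + 1) → ℕ) (hn : ∀ i, 2 ≤ n i)
    (hdvd : ∀ i : Fin s, n i.castSucc ∣ n (Fin.last s)) :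
    0 < #{x | phiEigenvalue n x = 1} ↔ ¬((∀ i : Fin s, n i.castSucc = 2) ∧ Even s) := by
  rw [card_phiEigenvalue_eq_one_eq_card_init_ne_one n (by have := hn (Fin.last s); omega) hdvd,
    card_pos, filter_nonempty_iff]
  simp only [mem_univ, true_and, ← not_forall]
  exact (forall_phiEigenvalue_eq_one_iff (Fin.init n) fun i => hn _).not

theorem multiplicity_one_prime_power (p : ℕ) (hp : p.Prime) {s : ℕ} (hs : 0 < s)
    (e : Fin s → ℕ) (he : ∀ i, 0 < e i) (hmono : Monotone e) :
    ((Polynomial.rootMultiplicity (1 : ℂ)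
        ((Chi (fun i => p ^ e i)).map (Int.castRingHom ℂ)) : ℤ)
      = ∑ j ∈ Finset.Icc 2 s, (-1) ^ (s - j) *
          ∏ i ∈ Finset.univ.filter (fun i : Fin s => (i : ℕ) < j - 1),
            ((p : ℤ) ^ (e i) - 1)) ∧
    (s = 1 → Polynomial.rootMultiplicity (1 : ℂ)
        ((Chi (fun i => p ^ e i)).map (Int.castRingHom ℂ)) = 0) ∧
    (2 ≤ s →
      (0 < Polynomial.rootMultiplicity (1 : ℂ)
          ((Chi (fun i => p ^ e i)).map (Int.castRingHom ℂ))
        ↔ ¬ (p = 2 ∧ (∀ i : Fin s, (i : ℕ) < s - 1 → e i = 1) ∧ Odd s))) := by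
  obtain ⟨m, rfl⟩ : ∃ m, s = m + 1 := ⟨s - 1, by omega⟩
  have hn : ∀ i, 2 ≤ p ^ e i := fun i => hp.two_le.trans (Nat.le_self_pow (he i).ne' p)
  have hdvd : ∀ ⦃i j⦄, i ≤ j → p ^ e i ∣ p ^ e j := fun i j hij => pow_dvd_pow p (hmono hij)
  have hformula := card_phiEigenvalue_eq_one_eq_altPrefixSum (fun i => p ^ e i)
    (fun i => by have := hn i; omega) hdvd
  simp only [altPrefixSum, Nat.cast_pow] at hformula
  rw [rootMultiplicity_Chi_map]
  refine ⟨hformula, fun h1 => ?_, fun hm => ?_⟩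
  · obtain rfl : m = 0 := by omega
    simpa using hformula
  · rw [card_phiEigenvalue_eq_one_pos_iff _ hn fun i => hdvd (Fin.le_last _)]
    have : Nonempty (Fin m) := ⟨⟨0, by omega⟩⟩
    simp [Nat.prime_two.pow_eq_iff, forall_and, Fin.forall_fin_succ', Nat.odd_add_one]
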